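/- arXiv:1311.4109 — 3 statements merged into one kernel-verified Lean document; each statement's English description precedes it below -/
import Mathlib

section
/- Sequential concatenation lemma: If [n]^2 admits a structured (a,1) knight's tour and an A-linked (a,1) knight's tour, then for every natural number k ≥ 1, [kn]^2 admits a structured (a,1) knight's tour. -/
/-- The (a,b) knight's graph on `ℕ × ℕ`: `(x,y) ~ (x',y')` iff `{|x-x'|,|y-y'|} = {a,b}`. -/
def knightGraph (a b : ℕ) : SimpleGraph (ℕ × ℕ) :=
  SimpleGraph.fromRel (fun v w =>
    ((v.1 + a = w.1 ∨ w.1 + a = v.1) ∧ (v.2 + b = w.2 ∨ w.2 + b = v.2)) ∨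
    ((v.1 + b = w.1 ∨ w.1 + b = v.1) ∧ (v.2 + a = w.2 ∨ w.2 + a = v.2)))

/-- A closed walk is a knight's tour of the board `[n]^2` if it is a cycle whose support is
exactly the board `[n] × [n]`. -/
def IsBoardTour (a b n : ℕ) {v : ℕ × ℕ} (p : (knightGraph a b).Walk v v) : Prop :=
  p.IsCycle ∧ ∀ x : ℕ × ℕ, x ∈ p.support ↔ (x.1 < n ∧ x.2 < n)

/-- A (a,1) knight's tour is *structured* if it contains all the edges
`{(i,j), (i+a, j+(-1)^j)}` for `0 ≤ i,j ≤ a-1`. -/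
def IsStructured (a : ℕ) {v : ℕ × ℕ} (p : (knightGraph a 1).Walk v v) : Prop :=
  ∀ i j : ℕ, i < a → j < a →
    (Even j → s((i, j), (i + a, j + 1)) ∈ p.edges) ∧
    (Odd j → s((i, j), (i + a, j - 1)) ∈ p.edges)

/-- A (a,1) knight's tour is *A-linked* if it contains link A, the edge
`{(a-1,1), (a-2,a+1)}`. -/
def IsALinked (a : ℕ) {v : ℕ × ℕ} (p : (knightGraph a 1).Walk v v) : Prop :=
  s((a - 1, 1), (a - 2, a + 1)) ∈ p.edges

/-!
Tile `[kn]²` by `n × n` blocks. Block `(0,0)` carries the structured tour; every other block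
carries a copy of the A-linked tour, translated (bottom row) or transposed and translated (other
rows). A corner of a block has only two knight neighbours inside the block, so every tour of the
block uses both corner edges there. A corner edge of one block and the image of link A in the
next block are two parallel knight moves joined by two further knight moves, and exchanging the
two pairs merges the two tours into one. Filling the board column by column, each merge deletes
a corner edge, which is never one of the structured edges, so these survive.
-/

open SimpleGraph Set

namespace SimpleGraph.Walk

variable {V W : Type*} {G : SimpleGraph V} {H : SimpleGraph W}

def IsCycleOn {v : V} (c : G.Walk v v) (S : Set V) : Prop :=
  c.IsCycle ∧ ∀ z, z ∈ c.support ↔ z ∈ S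

theorem IsCycle.exists_isPath_of_mem_edges {u x y : V} {c : G.Walk u u} (hc : c.IsCycle)
    (he : s(x, y) ∈ c.edges) :
    ∃ P : G.Walk y x, P.IsPath ∧ (∀ z, z ∈ P.support ↔ z ∈ c.support) ∧
      ∀ e ∈ c.edges, e ≠ s(x, y) → e ∈ P.edges := by
  classical
  have hx := c.fst_mem_support_of_mem_edges he
  obtain ⟨d, hd, rfl, hdc⟩ : ∃ d : G.Walk x x, d.IsCycle ∧ d.snd = y ∧
      d.toSubgraph = c.toSubgraph := by
    have hy : y ∈ (c.rotate x hx).toSubgraph.neighborSet x := by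
      rwa [Subgraph.mem_neighborSet, toSubgraph_rotate, adj_toSubgraph_iff_mem_edges]
    rw [(hc.rotate hx).neighborSet_toSubgraph_endpoint] at hy
    rcases hy with hy | hy
    · exact ⟨_, hc.rotate hx, hy.symm, toSubgraph_rotate c hx⟩
    · exact ⟨_, (hc.rotate hx).reverse, by rw [snd_reverse, hy],
        by rw [toSubgraph_reverse, toSubgraph_rotate]⟩
  refine ⟨d.tail, hd.isPath_tail, fun z => ?_, fun e he hne => ?_⟩
  · rw [← mem_verts_toSubgraph c, ← hdc, mem_verts_toSubgraph, ← cons_support_tail hd.not_nil,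
      List.mem_cons]
    exact (or_iff_right_of_imp (by rintro rfl; exact d.tail.end_mem_support)).symm
  · rw [← mem_edges_toSubgraph, ← hdc, mem_edges_toSubgraph, ← cons_tail_eq d hd.not_nil,
      edges_cons] at he
    exact (List.mem_cons.mp he).resolve_left hne

theorem IsCycleOn.merge {v₁ v₂ x₁ y₁ x₂ y₂ : V} {S₁ S₂ : Set V} {c₁ : G.Walk v₁ v₁}
    {c₂ : G.Walk v₂ v₂} (h₁ : c₁.IsCycleOn S₁) (h₂ : c₂.IsCycleOn S₂) (hS : Disjoint S₁ S₂)
    (he₁ : s(x₁, y₁) ∈ c₁.edges) (he₂ : s(x₂, y₂) ∈ c₂.edges) (hx : G.Adj x₁ x₂)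
    (hy : G.Adj y₂ y₁) :
    ∃ c : G.Walk x₁ x₁, c.IsCycleOn (S₁ ∪ S₂) ∧
      (∀ e ∈ c₁.edges, e ≠ s(x₁, y₁) → e ∈ c.edges) ∧
      ∀ e ∈ c₂.edges, e ≠ s(x₂, y₂) → e ∈ c.edges := by
  obtain ⟨P₁, hP₁, hP₁s, hP₁e⟩ := h₁.1.exists_isPath_of_mem_edges he₁
  obtain ⟨P₂, hP₂, hP₂s, hP₂e⟩ := h₂.1.exists_isPath_of_mem_edges he₂
  have hP₁S : ∀ z, z ∈ P₁.support ↔ z ∈ S₁ := fun z => (hP₁s z).trans (h₁.2 z)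
  have hP₂S : ∀ z, z ∈ P₂.support ↔ z ∈ S₂ := fun z => (hP₂s z).trans (h₂.2 z)
  have hx₁ : x₁ ∈ S₁ := (h₁.2 _).1 (c₁.fst_mem_support_of_mem_edges he₁)
  have hy₂ : y₂ ∈ S₂ := (h₂.2 _).1 (c₂.snd_mem_support_of_mem_edges he₂)
  refine ⟨(cons hx P₂.reverse).append (cons hy P₁), ⟨?_, fun z => ?_⟩,
    fun e he hne => ?_, fun e he hne => ?_⟩
  · refine (hP₂.reverse.cons ?_).isCycle_append (hP₁.cons ?_) ?_ (Or.inl ?_)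
    · rw [support_reverse, List.mem_reverse, hP₂S]
      exact hS.notMem_of_mem_left hx₁
    · rw [hP₁S]
      exact hS.notMem_of_mem_right hy₂
    · rw [support_cons, support_cons, List.tail_cons, List.tail_cons, List.disjoint_left]
      intro z hz₂ hz₁
      rw [support_reverse, List.mem_reverse, hP₂S] at hz₂
      exact hS.notMem_of_mem_left ((hP₁S z).1 hz₁) hz₂
    · have hne : P₂.length ≠ 0 := fun h =>
        (c₂.adj_of_mem_edges he₂).ne (eq_of_length_eq_zero h).symm
      simp only [length_cons, length_reverse]
      omega
  · simp only [support_append, support_cons, List.tail_cons, support_reverse, List.mem_cons,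
      List.mem_append, List.mem_reverse, hP₁S, hP₂S, Set.mem_union]
    constructor
    · rintro ((rfl | h) | h) <;> simp [*]
    · rintro (h | h) <;> simp [h]
  · simp [edges_append, hP₁e e he hne]
  · simp [edges_append, hP₂e e he hne]

theorem IsCycle.mem_edges_of_forall_mem_edges {u v w₁ w₂ : V} {c : G.Walk v v}
    (hc : c.IsCycle) (hu : u ∈ c.support) (h : ∀ w, s(u, w) ∈ c.edges → w = w₁ ∨ w = w₂) :
    s(u, w₁) ∈ c.edges ∧ s(u, w₂) ∈ c.edges := by
  have hsub : c.toSubgraph.neighborSet u ⊆ {w₁, w₂} :=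
    fun w hw => h w (adj_toSubgraph_iff_mem_edges.mp hw)
  have hcard : ({w₁, w₂} : Set V).ncard ≤ (c.toSubgraph.neighborSet u).ncard := by
    rw [hc.ncard_neighborSet_toSubgraph_eq_two hu]
    exact (ncard_insert_le _ _).trans (by rw [ncard_singleton])
  have heq := eq_of_subset_of_ncard_le hsub hcard (toFinite _)
  simp only [← adj_toSubgraph_iff_mem_edges, ← Subgraph.mem_neighborSet, heq]
  exact ⟨Or.inl rfl, Or.inr rfl⟩

theorem IsCycleOn.map {v : V} {c : G.Walk v v} {S : Set V} {f : G →g H}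
    (hf : Function.Injective f) (h : c.IsCycleOn S) : (c.map f).IsCycleOn (f '' S) := by
  refine ⟨(isCycle_map_iff_of_injective hf).2 h.1, fun z => ?_⟩
  simp [support_map, h.2]

theorem mk_mem_edges_map {v u w : V} {p : G.Walk v v} (f : G →g H) (h : s(u, w) ∈ p.edges) :
    s(f u, f w) ∈ (p.map f).edges := by
  rw [edges_map, ← Sym2.map_mk]
  exact List.mem_map_of_mem h

end SimpleGraph.Walk

open Walk

theorem knightGraph_adj {a b x y x' y' : ℕ} :
    (knightGraph a b).Adj (x, y) (x', y') ↔ (x ≠ x' ∨ y ≠ y') ∧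
      ((x + a = x' ∨ x' + a = x) ∧ (y + b = y' ∨ y' + b = y) ∨
        (x + b = x' ∨ x' + b = x) ∧ (y + a = y' ∨ y' + a = y)) := by
  simp only [knightGraph, fromRel_adj, ne_eq, Prod.mk.injEq]
  omega

def knightTranslate (a b dx dy : ℕ) : knightGraph a b →g knightGraph a b where
  toFun v := (v.1 + dx, v.2 + dy)
  map_rel' := by
    rintro ⟨x, y⟩ ⟨x', y'⟩ h
    rw [knightGraph_adj] at h ⊢
    omega

def knightSwap (a b : ℕ) : knightGraph a b →g knightGraph a b where
  toFun := Prod.swap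
  map_rel' := by
    rintro ⟨x, y⟩ ⟨x', y'⟩ h
    rw [Prod.swap_prod_mk, Prod.swap_prod_mk, knightGraph_adj]
    rw [knightGraph_adj] at h
    omega

theorem knightTranslate_injective (a b dx dy : ℕ) :
    Function.Injective (knightTranslate a b dx dy) := by
  rintro ⟨x, y⟩ ⟨x', y'⟩ h
  simp only [knightTranslate, RelHom.coeFn_mk, Prod.mk.injEq] at h
  simp only [Prod.mk.injEq]
  omega

theorem knightSwap_injective (a b : ℕ) : Function.Injective (knightSwap a b) :=
  Prod.swap_injective

def box (n x y : ℕ) : Set (ℕ × ℕ) := Ico x (x + n) ×ˢ Ico y (y + n)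

@[simp]
theorem mem_box {n x y : ℕ} {z : ℕ × ℕ} :
    z ∈ box n x y ↔ x ≤ z.1 ∧ z.1 < x + n ∧ y ≤ z.2 ∧ z.2 < y + n := by
  simp [box, and_assoc]

theorem image_knightTranslate_box (a b n x y : ℕ) :
    knightTranslate a b x y '' box n 0 0 = box n x y := by
  ext ⟨u, v⟩
  simp only [box, knightTranslate, RelHom.coeFn_mk, mem_image, mem_prod, mem_Ico, Prod.exists,
    Prod.mk.injEq]
  constructor
  · rintro ⟨u', v', h, rfl, rfl⟩
    omega
  · intro h
    exact ⟨u - x, v - y, by omega, by omega, by omega⟩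

theorem image_knightSwap_box (a b n : ℕ) : knightSwap a b '' box n 0 0 = box n 0 0 :=
  image_swap_prod _ _

theorem isBoardTour_iff_isCycleOn_box {a b n : ℕ} {v : ℕ × ℕ}
    (p : (knightGraph a b).Walk v v) : IsBoardTour a b n p ↔ p.IsCycleOn (box n 0 0) := by
  simp [IsBoardTour, IsCycleOn]

def HasStructuredTour (a n : ℕ) : Prop :=
  ∃ (v : ℕ × ℕ) (p : (knightGraph a 1).Walk v v), IsBoardTour a 1 n p ∧ IsStructured a p

def HasALinkedTour (a n : ℕ) : Prop :=
  ∃ (v : ℕ × ℕ) (p : (knightGraph a 1).Walk v v), IsBoardTour a 1 n p ∧ IsALinked a p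

def bottomRightEdge (a n x y : ℕ) : Sym2 (ℕ × ℕ) := s((x + n - 1, y), (x + n - 2, y + a))

def topLeftEdge (a n x y : ℕ) : Sym2 (ℕ × ℕ) := s((x, y + n - 1), (x + a, y + n - 2))

def partialBoard (n k i j : ℕ) : Set (ℕ × ℕ) :=
  Iio (i * n) ×ˢ Iio (k * n) ∪ Ico (i * n) (i * n + n) ×ˢ Iio (j * n + n)

@[simp]
theorem mem_partialBoard {n k i j : ℕ} {z : ℕ × ℕ} : z ∈ partialBoard n k i j ↔
    z.1 < i * n ∧ z.2 < k * n ∨ i * n ≤ z.1 ∧ z.1 < i * n + n ∧ z.2 < j * n + n := by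
  simp [partialBoard, and_assoc]

section Blocks

variable {a n : ℕ}

theorem corner_edges_mem_of_isCycleOn_box {x y : ℕ} {v : ℕ × ℕ}
    {p : (knightGraph a 1).Walk v v} (han : a < n) (hp : p.IsCycleOn (box n x y)) :
    bottomRightEdge a n x y ∈ p.edges ∧ topLeftEdge a n x y ∈ p.edges := by
  have hnbr : ∀ u w, s(u, w) ∈ p.edges → (knightGraph a 1).Adj u w ∧ w ∈ box n x y :=
    fun u w h => ⟨p.adj_of_mem_edges h, (hp.2 w).1 (p.snd_mem_support_of_mem_edges h)⟩
  constructor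
  · refine (hp.1.mem_edges_of_forall_mem_edges (w₁ := (x + n - 1 - a, y + 1))
      ((hp.2 _).2 ?_) fun ⟨w₁, w₂⟩ hw => ?_).2
    · rw [mem_box]
      omega
    · have := hnbr _ _ hw
      simp only [knightGraph_adj, mem_box, Prod.mk.injEq] at this ⊢
      omega
  · refine (hp.1.mem_edges_of_forall_mem_edges (w₁ := (x + 1, y + n - 1 - a))
      ((hp.2 _).2 ?_) fun ⟨w₁, w₂⟩ hw => ?_).2
    · rw [mem_box]
      omega
    · have := hnbr _ _ hw
      simp only [knightGraph_adj, mem_box, Prod.mk.injEq] at this ⊢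
      omega

theorem exists_isCycleOn_box_translate_linkA (ha : 2 ≤ a) (hA : HasALinkedTour a n)
    (x y : ℕ) : ∃ (v : ℕ × ℕ) (p : (knightGraph a 1).Walk v v), p.IsCycleOn (box n x y) ∧
      s((x + a - 1, y + 1), (x + a - 2, y + a + 1)) ∈ p.edges := by
  obtain ⟨v, p, hp, hl⟩ := hA
  refine ⟨_, p.map (knightTranslate a 1 x y), ?_, ?_⟩
  · rw [← image_knightTranslate_box a 1 n x y]
    exact ((isBoardTour_iff_isCycleOn_box p).1 hp).map (knightTranslate_injective a 1 x y)
  · convert mk_mem_edges_map (knightTranslate a 1 x y) hl using 3 <;>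
      simp only [knightTranslate, RelHom.coeFn_mk] <;> omega

theorem exists_isCycleOn_box_transpose_linkA (ha : 2 ≤ a) (hA : HasALinkedTour a n)
    (x y : ℕ) : ∃ (v : ℕ × ℕ) (p : (knightGraph a 1).Walk v v), p.IsCycleOn (box n x y) ∧
      s((x + 1, y + a - 1), (x + a + 1, y + a - 2)) ∈ p.edges := by
  obtain ⟨v, p, hp, hl⟩ := hA
  let f := (knightTranslate a 1 x y).comp (knightSwap a 1)
  refine ⟨_, p.map f, ?_, ?_⟩
  · rw [← image_knightTranslate_box a 1 n x y, ← image_knightSwap_box a 1 n, ← image_comp]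
    exact ((isBoardTour_iff_isCycleOn_box p).1 hp).map
      ((knightTranslate_injective a 1 x y).comp (knightSwap_injective a 1))
  · convert mk_mem_edges_map f hl using 3 <;>
      simp only [f, knightTranslate, knightSwap, RelHom.coeFn_mk, RelHom.comp_apply,
        Prod.swap_prod_mk] <;> omega

theorem exists_isCycleOn_union_box_right (ha : 2 ≤ a) (han : a < n) (hA : HasALinkedTour a n)
    {x y : ℕ} {S : Set (ℕ × ℕ)} {v : ℕ × ℕ} {p : (knightGraph a 1).Walk v v}
    (hp : p.IsCycleOn S) (hS : Disjoint S (box n (x + n) y))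
    (he : bottomRightEdge a n x y ∈ p.edges) :
    ∃ (w : ℕ × ℕ) (q : (knightGraph a 1).Walk w w), q.IsCycleOn (S ∪ box n (x + n) y) ∧
      bottomRightEdge a n (x + n) y ∈ q.edges ∧ topLeftEdge a n (x + n) y ∈ q.edges ∧
      ∀ e ∈ p.edges, e ≠ bottomRightEdge a n x y → e ∈ q.edges := by
  obtain ⟨_, r, hr, hl⟩ := exists_isCycleOn_box_translate_linkA ha hA (x + n) y
  obtain ⟨hbr, htl⟩ := corner_edges_mem_of_isCycleOn_box han hr
  obtain ⟨q, hq, hpq, hrq⟩ := hp.merge hr hS he hl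
    (by rw [knightGraph_adj]; omega) (by rw [knightGraph_adj]; omega)
  refine ⟨_, q, hq, hrq _ hbr ?_, hrq _ htl ?_, hpq⟩ <;>
    simp only [bottomRightEdge, topLeftEdge, ne_eq, Sym2.eq_iff, Prod.mk.injEq] <;> omega

theorem exists_isCycleOn_union_box_up (ha : 2 ≤ a) (han : a < n) (hA : HasALinkedTour a n)
    {x y : ℕ} {S : Set (ℕ × ℕ)} {v : ℕ × ℕ} {p : (knightGraph a 1).Walk v v}
    (hp : p.IsCycleOn S) (hS : Disjoint S (box n x (y + n)))
    (he : topLeftEdge a n x y ∈ p.edges) :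
    ∃ (w : ℕ × ℕ) (q : (knightGraph a 1).Walk w w), q.IsCycleOn (S ∪ box n x (y + n)) ∧
      topLeftEdge a n x (y + n) ∈ q.edges ∧
      ∀ e ∈ p.edges, e ≠ topLeftEdge a n x y → e ∈ q.edges := by
  obtain ⟨_, r, hr, hl⟩ := exists_isCycleOn_box_transpose_linkA ha hA x (y + n)
  obtain ⟨-, htl⟩ := corner_edges_mem_of_isCycleOn_box han hr
  obtain ⟨q, hq, hpq, hrq⟩ := hp.merge hr hS he hl
    (by rw [knightGraph_adj]; omega) (by rw [knightGraph_adj]; omega)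
  refine ⟨_, q, hq, hrq _ htl ?_, hpq⟩
  simp only [topLeftEdge, ne_eq, Sym2.eq_iff, Prod.mk.injEq]
  omega

theorem IsStructured.of_forall_mem_edges {E : Sym2 (ℕ × ℕ)} {v w : ℕ × ℕ}
    {p : (knightGraph a 1).Walk v v} {q : (knightGraph a 1).Walk w w} (hp : IsStructured a p)
    (hE : ∀ i j j', i < a → j < a → s((i, j), (i + a, j')) ≠ E)
    (hpq : ∀ e ∈ p.edges, e ≠ E → e ∈ q.edges) : IsStructured a q := fun i j hi hj =>
  ⟨fun h => hpq _ ((hp i j hi hj).1 h) (hE _ _ _ hi hj),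
    fun h => hpq _ ((hp i j hi hj).2 h) (hE _ _ _ hi hj)⟩

theorem exists_structured_tour_partialBoard_column (ha : 2 ≤ a) (hn : 2 * a ≤ n)
    (hA : HasALinkedTour a n) {k i : ℕ}
    (h₀ : ∃ (v : ℕ × ℕ) (p : (knightGraph a 1).Walk v v),
      p.IsCycleOn (partialBoard n k i 0) ∧ IsStructured a p ∧
      bottomRightEdge a n (i * n) 0 ∈ p.edges ∧ topLeftEdge a n (i * n) 0 ∈ p.edges) (j : ℕ) :
    ∃ (v : ℕ × ℕ) (p : (knightGraph a 1).Walk v v),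
      p.IsCycleOn (partialBoard n k i j) ∧ IsStructured a p ∧
      bottomRightEdge a n (i * n) 0 ∈ p.edges ∧ topLeftEdge a n (i * n) (j * n) ∈ p.edges := by
  induction j with
  | zero => simpa using h₀
  | succ j ih =>
    obtain ⟨_, p, hp, hs, hbr, htl⟩ := ih
    have hj : (j + 1) * n = j * n + n := Nat.succ_mul j n
    have hdisj : Disjoint (partialBoard n k i j) (box n (i * n) (j * n + n)) := by
      rw [Set.disjoint_left]
      rintro ⟨x, y⟩
      simp only [mem_partialBoard, mem_box]
      omega
    obtain ⟨_, q, hq, htl', hpq⟩ := exists_isCycleOn_union_box_up ha (by omega) hA hp hdisj htl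
    have hunion : partialBoard n k i j ∪ box n (i * n) (j * n + n) =
        partialBoard n k i (j + 1) := by
      ext ⟨x, y⟩
      simp only [mem_partialBoard, mem_box, mem_union]
      omega
    have hne : ∀ i' j' j'', i' < a → j' < a →
        s((i', j'), (i' + a, j'')) ≠ topLeftEdge a n (i * n) (j * n) := by
      intro i' j' j'' hi hj
      simp only [topLeftEdge, ne_eq, Sym2.eq_iff, Prod.mk.injEq]
      omega
    refine ⟨_, q, hunion ▸ hq, hs.of_forall_mem_edges hne hpq, hpq _ hbr ?_, by rwa [hj]⟩
    simp only [bottomRightEdge, topLeftEdge, ne_eq, Sym2.eq_iff, Prod.mk.injEq]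
    omega

theorem exists_structured_tour_partialBoard (ha : 2 ≤ a) (hn : 2 * a ≤ n)
    (hS : HasStructuredTour a n) (hA : HasALinkedTour a n) (k i : ℕ) :
    ∃ (v : ℕ × ℕ) (p : (knightGraph a 1).Walk v v),
      p.IsCycleOn (partialBoard n (k + 1) i k) ∧ IsStructured a p ∧
      bottomRightEdge a n (i * n) 0 ∈ p.edges := by
  have hk : (k + 1) * n = k * n + n := Nat.succ_mul k n
  induction i with
  | zero =>
    obtain ⟨v, p, hp, hs⟩ := hS
    rw [isBoardTour_iff_isCycleOn_box] at hp
    obtain ⟨hbr, htl⟩ := corner_edges_mem_of_isCycleOn_box (by omega) hp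
    have hbox : partialBoard n (k + 1) 0 0 = box n 0 0 := by
      ext ⟨x, y⟩
      simp only [mem_partialBoard, mem_box]
      omega
    obtain ⟨_, q, hq, hs', hbr', -⟩ := exists_structured_tour_partialBoard_column ha hn hA
      ⟨v, p, hbox ▸ hp, hs, by simpa using hbr, by simpa using htl⟩ k
    exact ⟨_, q, hq, hs', hbr'⟩
  | succ i ih =>
    obtain ⟨_, p, hp, hs, hbr⟩ := ih
    have hi : (i + 1) * n = i * n + n := Nat.succ_mul i n
    have hdisj : Disjoint (partialBoard n (k + 1) i k) (box n (i * n + n) 0) := by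
      rw [Set.disjoint_left]
      rintro ⟨x, y⟩
      simp only [mem_partialBoard, mem_box]
      omega
    obtain ⟨_, q, hq, hbr', htl', hpq⟩ :=
      exists_isCycleOn_union_box_right ha (by omega) hA hp hdisj hbr
    have hunion : partialBoard n (k + 1) i k ∪ box n (i * n + n) 0 =
        partialBoard n (k + 1) (i + 1) 0 := by
      ext ⟨x, y⟩
      simp only [mem_partialBoard, mem_box, mem_union]
      omega
    have hne : ∀ i' j' j'', i' < a → j' < a →
        s((i', j'), (i' + a, j'')) ≠ bottomRightEdge a n (i * n) 0 := by
      intro i' j' j'' hi' hj'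
      simp only [bottomRightEdge, ne_eq, Sym2.eq_iff, Prod.mk.injEq]
      omega
    obtain ⟨_, q', hq', hs', hbr'', -⟩ := exists_structured_tour_partialBoard_column ha hn hA
      ⟨_, q, hunion ▸ hq, hs.of_forall_mem_edges hne hpq, by rwa [hi], by rwa [hi]⟩ k
    exact ⟨_, q', hq', hs', hbr''⟩

end Blocks

theorem two_le_of_isALinked {a : ℕ} {v : ℕ × ℕ} {p : (knightGraph a 1).Walk v v}
    (h : IsALinked a p) : 2 ≤ a := by
  have := p.adj_of_mem_edges h
  rw [knightGraph_adj] at this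
  omega

theorem two_mul_le_of_isStructured {a n : ℕ} {v : ℕ × ℕ} {p : (knightGraph a 1).Walk v v}
    (ha : 1 ≤ a) (hp : IsBoardTour a 1 n p) (hs : IsStructured a p) : 2 * a ≤ n := by
  have he := (hs (a - 1) 0 (by omega) (by omega)).1 Even.zero
  have := (hp.2 _).1 (p.snd_mem_support_of_mem_edges he)
  omega

theorem structured_tour_scale_general (a n : ℕ)
    (h1 : ∃ (v : ℕ × ℕ) (p : (knightGraph a 1).Walk v v),
      IsBoardTour a 1 n p ∧ IsStructured a p)
    (h2 : ∃ (v : ℕ × ℕ) (p : (knightGraph a 1).Walk v v),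
      IsBoardTour a 1 n p ∧ IsALinked a p)
    (k : ℕ) (hk : 1 ≤ k) :
    ∃ (v : ℕ × ℕ) (p : (knightGraph a 1).Walk v v),
      IsBoardTour a 1 (k * n) p ∧ IsStructured a p := by
  have ha : 2 ≤ a := by
    obtain ⟨_, _, -, hl⟩ := h2
    exact two_le_of_isALinked hl
  have hn : 2 * a ≤ n := by
    obtain ⟨_, _, hp, hs⟩ := h1
    exact two_mul_le_of_isStructured (by omega) hp hs
  obtain ⟨m, rfl⟩ : ∃ m, k = m + 1 := ⟨k - 1, by omega⟩
  obtain ⟨v, p, hp, hs, -⟩ := exists_structured_tour_partialBoard ha hn h1 h2 m m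
  have hm : (m + 1) * n = m * n + n := Nat.succ_mul m n
  refine ⟨v, p, ⟨hp.1, fun x => ?_⟩, hs⟩
  rw [hp.2, mem_partialBoard]
  omega

/-- Sequential concatenation: if `[n]^2` admits a structured (a,1) knight's tour and an
A-linked (a,1) knight's tour, then `[kn]^2` admits a structured (a,1) knight's tour for
every `k ≥ 1`. -/
theorem structured_tour_scale (a n : ℕ) (ha : Even a) (hn : Even n)
    (h1 : ∃ (v : ℕ × ℕ) (p : (knightGraph a 1).Walk v v),
      IsBoardTour a 1 n p ∧ IsStructured a p)
    (h2 : ∃ (v : ℕ × ℕ) (p : (knightGraph a 1).Walk v v),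
      IsBoardTour a 1 n p ∧ IsALinked a p)
    (k : ℕ) (hk : 1 ≤ k) :
    ∃ (v : ℕ × ℕ) (p : (knightGraph a 1).Walk v v),
      IsBoardTour a 1 (k * n) p ∧ IsStructured a p :=
  structured_tour_scale_general a n h1 h2 k hk
end

section
/- For even a, the (a,1) knight's graph on [2a]^2 is not Hamiltonian. -/
/-!
Write `a = 2k`. Let `T` consist of the squares of the lower-left quadrant `[0, a)²` with both
coordinates even and of the upper-right quadrant with both coordinates odd, and `S` of the squares
of the two other quadrants whose coordinates have different parities, the odd one lying in the
lower half of its axis. Since `a` is even, every knight neighbour of a square of `T` lies in `S`,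
and `|S| ≤ |T|`. In a Hamiltonian cycle the `2|T|` cycle edges at `T` all end in `S`, which has
only `2|S|` cycle edges; so all cycle edges at `S` come from `T`, the cycle never leaves `T ∪ S`,
and it misses the square `(1, 1)`.
-/

open Finset SimpleGraph

namespace SimpleGraph.Subgraph

variable {V : Type*} {G : SimpleGraph V}

theorem neighborSet_subset_of_card_le (H : G.Subgraph) {d : ℕ} (hd : 0 < d)
    {T S : Finset V} (hdegT : ∀ t ∈ T, (H.neighborSet t).ncard = d)
    (hdegS : ∀ s ∈ S, (H.neighborSet s).ncard = d)
    (hTS : ∀ t ∈ T, H.neighborSet t ⊆ S) (hcard : #S ≤ #T) :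
    ∀ s ∈ S, H.neighborSet s ⊆ T := by
  classical
  have above : ∀ t ∈ T, #(S.bipartiteAbove H.Adj t) = d := fun t ht => by
    have : (S.bipartiteAbove H.Adj t : Set V) = H.neighborSet t := by
      ext w
      simpa using fun hw => hTS t ht hw
    rw [← Set.ncard_coe_finset, this, hdegT t ht]
  have below_sub : ∀ s, (T.bipartiteBelow H.Adj s : Set V) ⊆ H.neighborSet s := fun s w hw =>
    (mem_bipartiteBelow _).mp hw |>.2.symm
  have finite : ∀ s ∈ S, (H.neighborSet s).Finite := fun s hs =>
    Set.finite_of_ncard_pos (hdegS s hs ▸ hd)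
  have below_le : ∀ s ∈ S, #(T.bipartiteBelow H.Adj s) ≤ d := fun s hs => by
    rw [← Set.ncard_coe_finset, ← hdegS s hs]
    exact Set.ncard_le_ncard (below_sub s) (finite s hs)
  have below_eq : ∀ s ∈ S, #(T.bipartiteBelow H.Adj s) = d := by
    refine (sum_eq_sum_iff_of_le below_le).mp (le_antisymm (sum_le_sum below_le) ?_)
    calc ∑ _ ∈ S, d = #S * d := by rw [sum_const, smul_eq_mul]
      _ ≤ #T * d := Nat.mul_le_mul_right d hcard
      _ = ∑ t ∈ T, #(S.bipartiteAbove H.Adj t) := by rw [sum_congr rfl above, sum_const, smul_eq_mul]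
      _ = ∑ s ∈ S, #(T.bipartiteBelow H.Adj s) := sum_card_bipartiteAbove_eq_sum_card_bipartiteBelow _
  intro s hs
  have : (T.bipartiteBelow H.Adj s : Set V) = H.neighborSet s :=
    Set.eq_of_subset_of_ncard_le (below_sub s)
      (by rw [Set.ncard_coe_finset, below_eq s hs, hdegS s hs]) (finite s hs)
  rw [← this]
  exact fun w hw => ((mem_bipartiteBelow _).mp hw).1

theorem Connected.verts_subset_of_adj_closed {H : G.Subgraph} (hH : H.Connected) {A : Set V}
    (hA : ∀ x y, H.Adj x y → x ∈ A → y ∈ A) {u : V} (hu : u ∈ H.verts) (huA : u ∈ A) :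
    H.verts ⊆ A := by
  intro v hv
  by_contra hvA
  obtain ⟨p, hpH⟩ := (connected_iff_forall_exists_walk_subgraph H).mp hH |>.2 hu hv
  obtain ⟨d, hd, hd₁, hd₂⟩ := p.exists_boundary_dart A huA hvA
  have : p.toSubgraph.Adj d.fst d.snd :=
    Walk.adj_toSubgraph_iff_mem_edges.mpr (List.mem_map_of_mem hd)
  exact hd₂ (hA _ _ (hpH.2 this) hd₁)

end SimpleGraph.Subgraph

namespace SimpleGraph.Walk.IsCycle

variable {V : Type*} {G : SimpleGraph V}

theorem support_subset_of_card_le {v : V} {c : G.Walk v v} (hc : c.IsCycle) {T S : Finset V}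
    (hT : ∀ t ∈ T, t ∈ c.support) (hS : ∀ s ∈ S, s ∈ c.support)
    (hTS : ∀ t ∈ T, ∀ w ∈ c.support, G.Adj t w → w ∈ S) (hcard : #S ≤ #T) (hne : T.Nonempty) :
    ∀ x ∈ c.support, x ∈ T ∨ x ∈ S := by
  set H := c.toSubgraph
  have hTS' : ∀ t ∈ T, H.neighborSet t ⊆ S := fun t ht w htw =>
    hTS t ht w (mem_support_of_adj_toSubgraph htw.symm) (H.adj_sub htw)
  have hST := H.neighborSet_subset_of_card_le two_pos
    (fun t ht => hc.ncard_neighborSet_toSubgraph_eq_two (hT t ht))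
    (fun s hs => hc.ncard_neighborSet_toSubgraph_eq_two (hS s hs)) hTS' hcard
  have hclosed : ∀ x y, H.Adj x y → x ∈ (T ∪ S : Set V) → y ∈ (T ∪ S : Set V) := by
    rintro x y hxy (hx | hx)
    · exact Or.inr (hTS' x hx hxy)
    · exact Or.inl (hST x hx hxy)
  obtain ⟨t, ht⟩ := hne
  exact fun x hx => c.toSubgraph_connected.verts_subset_of_adj_closed hclosed
    (c.mem_verts_toSubgraph.mpr (hT t ht)) (Or.inl ht) (c.mem_verts_toSubgraph.mpr hx)

end SimpleGraph.Walk.IsCycle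

def knightTrapped (a : ℕ) : Finset (ℕ × ℕ) :=
  (range (2 * a) ×ˢ range (2 * a)).filter fun x =>
    (x.1 % 2 = 0 ∧ x.2 % 2 = 0 ∧ x.1 < a ∧ x.2 < a) ∨
    (x.1 % 2 = 1 ∧ x.2 % 2 = 1 ∧ a ≤ x.1 ∧ a ≤ x.2)

def knightGuards (a : ℕ) : Finset (ℕ × ℕ) :=
  (range (2 * a) ×ˢ range (2 * a)).filter fun x =>
    (x.1 % 2 = 1 ∧ x.2 % 2 = 0 ∧ x.1 < a ∧ a ≤ x.2) ∨
    (x.1 % 2 = 0 ∧ x.2 % 2 = 1 ∧ a ≤ x.1 ∧ x.2 < a)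

theorem knightGraph_adj_mem_knightGuards {a : ℕ} (ha : Even a) {t w : ℕ × ℕ}
    (ht : t ∈ knightTrapped a) (htw : (knightGraph a 1).Adj t w) (hw : w.1 < 2 * a ∧ w.2 < 2 * a) :
    w ∈ knightGuards a := by
  obtain ⟨k, rfl⟩ := ha
  simp only [knightTrapped, knightGuards, mem_filter, mem_product, mem_range] at ht ⊢
  simp only [knightGraph, fromRel_adj] at htw
  omega

theorem card_knightGuards_le {a : ℕ} (ha : Even a) : #(knightGuards a) ≤ #(knightTrapped a) := by
  obtain ⟨k, rfl⟩ := ha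
  refine card_le_card_of_injOn
    (fun x => if x.1 < k + k then (x.1 - 1, x.2 - (k + k)) else (x.1 + 1, x.2 + (k + k))) ?_ ?_
  · intro x hx
    simp only [knightTrapped, knightGuards, coe_filter, mem_product, mem_range,
      Set.mem_ofPred_eq] at hx ⊢
    split_ifs <;> omega
  · intro x hx y hy hxy
    simp only [knightGuards, coe_filter, mem_product, mem_range, Set.mem_ofPred_eq] at hx hy
    dsimp only at hxy
    split_ifs at hxy <;> simp only [Prod.ext_iff] at hxy ⊢ <;> omega

/-- For even `a`, the (a,1) knight's graph on `[2a]^2` is not Hamiltonian. -/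
theorem no_tour_smallest_board (a : ℕ) (ha : Even a) :
    ¬ ∃ (v : ℕ × ℕ) (p : (knightGraph a 1).Walk v v), IsBoardTour a 1 (2 * a) p := by
  rintro ⟨v, p, hcyc, hsupp⟩
  have ha2 : a % 2 = 0 := Nat.even_iff.mp ha
  have ha0 : 0 < a := by have := (hsupp v).mp p.start_mem_support; omega
  have hT : ∀ t ∈ knightTrapped a, t ∈ p.support := fun t ht =>
    (hsupp t).mpr (by simpa using (mem_filter.mp ht).1)
  have hS : ∀ s ∈ knightGuards a, s ∈ p.support := fun s hs =>
    (hsupp s).mpr (by simpa using (mem_filter.mp hs).1)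
  have hcover := hcyc.support_subset_of_card_le hT hS
    (fun t ht w hw htw => knightGraph_adj_mem_knightGuards ha ht htw ((hsupp w).mp hw))
    (card_knightGuards_le ha) ⟨(0, 0), by simpa [knightTrapped] using ha0⟩
  have h11 := hcover (1, 1) ((hsupp (1, 1)).mpr ⟨by omega, by omega⟩)
  simp only [knightTrapped, knightGuards, mem_filter, mem_product, mem_range] at h11
  omega
end

section
/- Floor-stacking lemma: Let G be a graph that is the disjoint union of floors G_1, ..., G_l, each isomorphic to a fixed graph H that admits a Hamiltonian cycle containing a distinguished edge e = {u,v} and another edge e' = {u',v'}, such that for each i the vertex u_i of floor i is adjacent (in G) to u'_{i+1} of floor i+1 and v_i is adjacent to v'_{i+1}. Then G admits a Hamiltonian cycle. -/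
/-!
Every floor carries a copy of the Hamiltonian cycle of `H`, and the floors are merged one at a
time. The cycle built so far passes through the edge `u_i v_i` of its top floor; deleting that
edge and the edge `u'_{i+1} v'_{i+1}` of the next floor's cycle and adding the two bridges
`u_i u'_{i+1}`, `v_i v'_{i+1}` yields a single cycle through both vertex sets. It still contains
`u_{i+1} v_{i+1}`, since that edge differs from the deleted one, so the process continues.
-/

namespace SimpleGraph.Walk

variable {V : Type*} {G : SimpleGraph V}

theorem IsCycle.exists_cons_of_mem_edges [DecidableEq V] {x a b : V} {c : G.Walk x x}
    (hc : c.IsCycle) (hab : s(a, b) ∈ c.edges) :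
    ∃ (h : G.Adj a b) (p : G.Walk b a),
      (cons h p).IsCycle ∧ (cons h p).toSubgraph = c.toSubgraph := by
  have ha : a ∈ c.support := c.fst_mem_support_of_mem_edges hab
  have hc' : (c.rotate a ha).IsCycle := hc.rotate ha
  have hb : b ∈ (c.rotate a ha).toSubgraph.neighborSet a := by
    rw [toSubgraph_rotate, Subgraph.mem_neighborSet, ← Subgraph.mem_edgeSet, mem_edges_toSubgraph]
    exact hab
  obtain ⟨d, hd, hsnd, hsub⟩ : ∃ d : G.Walk a a, d.IsCycle ∧ d.snd = b ∧
      d.toSubgraph = c.toSubgraph := by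
    rcases hc'.neighborSet_toSubgraph_endpoint ▸ hb with hb | hb
    · exact ⟨_, hc', hb.symm, toSubgraph_rotate c ha⟩
    · refine ⟨_, hc'.reverse, ?_, by rw [toSubgraph_reverse, toSubgraph_rotate]⟩
      rw [snd_reverse, hb]
  subst hsnd
  have hd_eq := cons_tail_eq d hd.not_nil
  exact ⟨_, _, by rwa [hd_eq], by rwa [hd_eq]⟩

theorem IsCycle.exists_compound [DecidableEq V] {x y a b a' b' : V} {c : G.Walk x x}
    {d : G.Walk y y} (hc : c.IsCycle) (hd : d.IsCycle) (hab : s(a, b) ∈ c.edges)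
    (hab' : s(a', b') ∈ d.edges) (hcd : c.support.Disjoint d.support)
    (haa' : G.Adj a a') (hbb' : G.Adj b b') :
    ∃ e : G.Walk a a, e.IsCycle ∧ (∀ z, z ∈ e.support ↔ z ∈ c.support ∨ z ∈ d.support) ∧
      ∀ f ∈ d.edges, f ≠ s(a', b') → f ∈ e.edges := by
  obtain ⟨h, p, hpc, hpc_sub⟩ := hc.exists_cons_of_mem_edges hab
  obtain ⟨h', q, hqd, hqd_sub⟩ := hd.exists_cons_of_mem_edges hab'
  have hc_supp : ∀ z, z ∈ c.support ↔ z ∈ p.support := fun z => by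
    rw [← mem_verts_toSubgraph, ← hpc_sub, mem_verts_toSubgraph, support_cons, List.mem_cons,
      or_iff_right_of_imp fun hz => hz ▸ p.end_mem_support]
  have hd_supp : ∀ z, z ∈ d.support ↔ z ∈ q.support := fun z => by
    rw [← mem_verts_toSubgraph, ← hqd_sub, mem_verts_toSubgraph, support_cons, List.mem_cons,
      or_iff_right_of_imp fun hz => hz ▸ q.end_mem_support]
  have hd_edges : ∀ f, f ∈ d.edges ↔ f = s(a', b') ∨ f ∈ q.edges := fun f => by
    rw [← mem_edges_toSubgraph, ← hqd_sub, mem_edges_toSubgraph, edges_cons, List.mem_cons]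
  have hp := ((cons_isCycle_iff p h).mp hpc).1
  have hq := ((cons_isCycle_iff q h').mp hqd).1
  have hpq : p.support.Disjoint q.support := fun z hzp hzq =>
    hcd ((hc_supp z).mpr hzp) ((hd_supp z).mpr hzq)
  refine ⟨(cons haa' q.reverse).append (cons hbb'.symm p), ?_, fun z => ?_, fun f hf hne => ?_⟩
  · refine IsPath.isCycle_append ?_ ?_ ?_ (Or.inr ?_)
    · rw [cons_isPath_iff, isPath_reverse_iff, support_reverse, List.mem_reverse]
      exact ⟨hq, hpq p.end_mem_support⟩
    · rw [cons_isPath_iff]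
      exact ⟨hp, fun hb' => hpq hb' q.start_mem_support⟩
    · simpa using hpq.symm
    · have : p.length ≠ 0 := fun h0 => h.ne (p.eq_of_length_eq_zero h0).symm
      rw [length_cons]
      omega
  · simp only [support_append, support_cons, List.tail_cons, support_reverse, List.mem_cons,
      List.mem_append, List.mem_reverse, hc_supp, hd_supp]
    have := p.end_mem_support
    have := q.start_mem_support
    grind
  · rw [edges_append, edges_cons, edges_reverse]
    simp [(hd_edges f).mp hf |>.resolve_left hne]

theorem IsCycle.isHamiltonianCycle_of_forall_mem_support [DecidableEq V] {u : V} {p : G.Walk u u}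
    (hp : p.IsCycle) (h : ∀ w, w ∈ p.support) : p.IsHamiltonianCycle := by
  refine isHamiltonianCycle_isCycle_and_isHamiltonian_tail.mpr
    ⟨hp, hp.isPath_tail.isHamiltonian_of_mem fun w => ?_⟩
  rw [support_tail_of_not_nil p hp.not_nil]
  rcases p.mem_support_iff.mp (h w) with rfl | hw
  · exact end_mem_tail_support hp.not_nil
  · exact hw

theorem exists_isCycle_of_stacked_cycles [DecidableEq V] {n : ℕ} {y a b a' b' : Fin (n + 1) → V}
    (d : ∀ i, G.Walk (y i) (y i)) (hd : ∀ i, (d i).IsCycle)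
    (hdisj : Pairwise fun i j => (d i).support.Disjoint (d j).support)
    (hab : ∀ i, s(a i, b i) ∈ (d i).edges) (hab' : ∀ i, s(a' i, b' i) ∈ (d i).edges)
    (hne : ∀ i, s(a i, b i) ≠ s(a' i, b' i))
    (haa' : ∀ i : Fin n, G.Adj (a i.castSucc) (a' i.succ))
    (hbb' : ∀ i : Fin n, G.Adj (b i.castSucc) (b' i.succ)) :
    ∃ (x : V) (e : G.Walk x x), e.IsCycle ∧ (∀ z, z ∈ e.support ↔ ∃ i, z ∈ (d i).support) ∧
      s(a (Fin.last n), b (Fin.last n)) ∈ e.edges := by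
  induction n with
  | zero => exact ⟨_, d 0, hd 0, fun z => by simp [Fin.exists_fin_one], hab 0⟩
  | succ n ih =>
    obtain ⟨x, e, he, he_supp, he_edge⟩ := ih (fun i => d i.castSucc) (fun i => hd _)
      (fun i j hij => hdisj (Fin.castSucc_injective _ |>.ne hij)) (fun i => hab _)
      (fun i => hab' _) (fun i => hne _) (fun i => haa' i.castSucc) (fun i => hbb' i.castSucc)
    have hdisj_last : e.support.Disjoint (d (Fin.last (n + 1))).support := fun z hz hz' => by
      obtain ⟨i, hi⟩ := (he_supp z).mp hz
      exact hdisj (Fin.castSucc_ne_last i) hi hz'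
    obtain ⟨e', he', he'_supp, he'_edges⟩ := he.exists_compound (hd _) he_edge (hab' _)
      hdisj_last (haa' (Fin.last n)) (hbb' (Fin.last n))
    refine ⟨_, e', he', fun z => ?_, he'_edges _ (hab _) (hne _)⟩
    rw [he'_supp, or_congr_left (he_supp z),
      Fin.exists_fin_succ' (P := fun i => z ∈ (d i).support)]

end SimpleGraph.Walk

open SimpleGraph Walk

/-- Floor-stacking lemma: let `G` be a graph on `l` disjoint floors, each copy of a graph
`H` that admits a Hamiltonian cycle containing two distinct distinguished edges
`e = {u,v}` and `e' = {u',v'}`; each floor carries all edges of `H`, and between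
consecutive floors `i`, `i+1` there are cross edges from `u_i` to `u'_{i+1}` and from
`v_i` to `v'_{i+1}`. Then `G` admits a Hamiltonian cycle. -/
theorem floor_stacking {α : Type*} [DecidableEq α] (H : SimpleGraph α)
    (l : ℕ) (hl : 0 < l) (G : SimpleGraph (Fin l × α)) (u v u' v' : α)
    (hne : s(u, v) ≠ s(u', v'))
    (hham : ∃ (x : α) (c : H.Walk x x), c.IsHamiltonianCycle ∧
      s(u, v) ∈ c.edges ∧ s(u', v') ∈ c.edges)
    (hfloor : ∀ (i : Fin l) (x y : α), H.Adj x y → G.Adj (i, x) (i, y))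
    (hbridge : ∀ (i : ℕ) (hi : i + 1 < l),
      G.Adj ((⟨i, by omega⟩ : Fin l), u) ((⟨i + 1, hi⟩ : Fin l), u') ∧
      G.Adj ((⟨i, by omega⟩ : Fin l), v) ((⟨i + 1, hi⟩ : Fin l), v')) :
    ∃ (w : Fin l × α) (p : G.Walk w w), p.IsHamiltonianCycle := by
  obtain ⟨x, c, hc, huv, hu'v'⟩ := hham
  obtain ⟨n, rfl⟩ := Nat.exists_eq_add_one_of_ne_zero hl.ne'
  let floor (i : Fin (n + 1)) : H →g G := ⟨fun a => (i, a), hfloor i _ _⟩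
  have hfloor_inj (i) : Function.Injective (floor i) := fun _ _ h => congrArg Prod.snd h
  have hfloor_supp (i) (z : Fin (n + 1) × α) : z ∈ (c.map (floor i)).support ↔ z.1 = i := by
    simp [floor, Walk.support_map, hc.mem_support, Prod.ext_iff, eq_comm]
  have hfloor_edges (i) {a b : α} (h : s(a, b) ∈ c.edges) :
      s((i, a), (i, b)) ∈ (c.map (floor i)).edges :=
    edges_map (floor i) c ▸ List.mem_map_of_mem h
  obtain ⟨w, e, he, he_supp, -⟩ := exists_isCycle_of_stacked_cycles (fun i => c.map (floor i))
    (fun i => (isCycle_map_iff_of_injective (hfloor_inj i)).mpr hc.isCycle)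
    (fun i j hij z hi hj => hij (((hfloor_supp i z).mp hi).symm.trans ((hfloor_supp j z).mp hj)))
    (fun i => hfloor_edges i huv) (fun i => hfloor_edges i hu'v')
    (fun i h => hne (by simpa using congrArg (Sym2.map Prod.snd) h))
    (fun i => (hbridge i (by omega)).1) (fun i => (hbridge i (by omega)).2)
  exact ⟨w, e, he.isHamiltonianCycle_of_forall_mem_support fun z =>
    (he_supp z).mpr ⟨z.1, (hfloor_supp _ _).mpr rfl⟩⟩
end
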